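/- For c ∈ ℝ, ∫₀ʰ ∫₀ᵗ e^{cτ} B_{i,p,h}(τ) dτ dt = [h²(p-i+1)/(p(p+1))] · ₁F₁(i; p+2; ch). -/

import Mathlib

/-- Bernstein polynomial `B_{i,p,h}` on `[0,h]`, with the convention that it
vanishes for indices `i` outside `1 ≤ i ≤ p`. -/
noncomputable def bern (p i : ℕ) (h t : ℝ) : ℝ :=
  if 1 ≤ i ∧ i ≤ p then
    (Nat.choose (p - 1) (i - 1) : ℝ) * (t / h) ^ (i - 1) * ((h - t) / h) ^ (p - i)
  else 0

/-- Rising factorial `x^{(q)} = x (x+1) ⋯ (x+q-1)`. -/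
def rising (x q : ℕ) : ℕ := ∏ k ∈ Finset.range q, (x + k)

/-- Kummer confluent hypergeometric function `₁F₁(a; b; z)` for natural parameters. -/
noncomputable def kummer (a b : ℕ) (z : ℝ) : ℝ :=
  ∑' n : ℕ, (rising a n : ℝ) * z ^ n / ((rising b n : ℝ) * (Nat.factorial n : ℝ))

/-!
Integrating by parts in the outer variable (Cauchy's formula for repeated integration) turns the
double integral into `∫₀ʰ e^{ct} (h - t) B_{i,p,h}(t) dt`. Expanding `e^{ct}` and integrating
termwise leaves the Beta integrals `∫₀ʰ t^m (h - t)^k dt = h^{m+k+1} m! k! / (m+k+1)!`, whose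
factorial ratios are exactly the coefficients of `₁F₁(i; p+2; ch)`.
-/

open intervalIntegral
open scoped Nat

theorem integral_integral_eq_integral_mul_sub {f : ℝ → ℝ} (hf : Continuous f) (a b : ℝ) :
    ∫ t in a..b, (∫ τ in a..t, f τ) = ∫ t in a..b, f t * (b - t) := by
  have hF : ∀ x, HasDerivAt (fun t => ∫ τ in a..t, f τ) (f x) x := fun x =>
    integral_hasDerivAt_right (hf.intervalIntegrable _ _) (hf.stronglyMeasurableAtFilter _ _)
      hf.continuousAt
  have parts := integral_mul_deriv_eq_deriv_mul (fun x _ => hF x)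
    (fun x _ => (hasDerivAt_id x).sub_const b) (hf.intervalIntegrable a b)
    (intervalIntegrable_const (c := (1 : ℝ)))
  simp only [mul_one, id, sub_self, mul_zero, integral_same, zero_mul] at parts
  rw [parts, zero_sub, ← integral_neg]
  congr 1 with t
  ring

theorem integral_pow_mul_sub_pow_succ (h : ℝ) (m k : ℕ) :
    (m + 1) * ∫ t in (0 : ℝ)..h, t ^ m * (h - t) ^ (k + 1) =
      (k + 1) * ∫ t in (0 : ℝ)..h, t ^ (m + 1) * (h - t) ^ k := by
  have parts := integral_mul_deriv_eq_deriv_mul (a := 0) (b := h)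
    (u := fun t => (h - t) ^ (k + 1)) (v := fun t => t ^ (m + 1))
    (fun x _ => ((hasDerivAt_id x).const_sub h).pow (k + 1))
    (fun x _ => hasDerivAt_pow (m + 1) x)
    (Continuous.intervalIntegrable (by fun_prop) _ _)
    (Continuous.intervalIntegrable (by fun_prop) _ _)
  simp only [sub_self, sub_zero, add_tsub_cancel_right, id, ne_eq, add_eq_zero, one_ne_zero,
    and_false, not_false_eq_true, zero_pow, zero_mul, mul_zero, zero_sub, ← integral_neg] at parts
  rw [← integral_const_mul, ← integral_const_mul]
  convert parts using 1 <;> congr 1 with x <;> push_cast <;> ring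

theorem integral_pow_mul_sub_pow (h : ℝ) (m k : ℕ) :
    ∫ t in (0 : ℝ)..h, t ^ m * (h - t) ^ k = h ^ (m + k + 1) * m ! * k ! / (m + k + 1)! := by
  induction k generalizing m with
  | zero =>
    simp only [pow_zero, mul_one, add_zero, integral_pow, Nat.factorial_succ, Nat.factorial_zero,
      ne_eq, Nat.add_eq_zero_iff, one_ne_zero, and_false, not_false_eq_true, zero_pow, sub_zero]
    push_cast
    field_simp
  | succ k ih =>
    have hm : (m + 1 : ℝ) ≠ 0 := by positivity
    rw [← mul_right_inj' hm, integral_pow_mul_sub_pow_succ, ih,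
      show m + 1 + k + 1 = m + (k + 1) + 1 by ring]
    push_cast [Nat.factorial_succ]
    field_simp

theorem hasSum_integral_exp_mul {f : ℝ → ℝ} {a b : ℝ} (c : ℝ)
    (hf : IntervalIntegrable f MeasureTheory.volume a b) :
    HasSum (fun n : ℕ => c ^ n / n ! * ∫ t in a..b, t ^ n * f t)
      (∫ t in a..b, Real.exp (c * t) * f t) := by
  have hexp : ∀ x : ℝ, HasSum (fun n : ℕ => x ^ n / n !) (Real.exp x) := fun x => by
    rw [Real.exp_eq_exp_ℝ]; exact NormedSpace.expSeries_div_hasSum_exp x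
  simp_rw [← integral_const_mul]
  refine hasSum_integral_of_dominated_convergence (fun n t => |c * t| ^ n / n ! * ‖f t‖)
    (fun n => ?_) (fun n => ?_) ?_ ?_ ?_
  · exact ((Continuous.aestronglyMeasurable (by fun_prop)).mul hf.def'.1).const_mul _
  · refine Filter.Eventually.of_forall fun t _ => le_of_eq ?_
    simp only [norm_mul, norm_div, norm_pow, Real.norm_eq_abs, abs_mul, Nat.abs_cast, mul_pow]
    ring
  · exact Filter.Eventually.of_forall fun t _ => (Real.summable_pow_div_factorial _).mul_right _
  · simp_rw [tsum_mul_right, (hexp _).tsum_eq]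
    exact hf.norm.continuousOn_mul (by fun_prop)
  · refine Filter.Eventually.of_forall fun t _ => ?_
    have hterm :
        (fun n : ℕ => c ^ n / n ! * (t ^ n * f t)) = fun n => (c * t) ^ n / n ! * f t := by
      ext n
      ring
    exact hterm ▸ (hexp (c * t)).mul_right (f t)

theorem cast_rising_succ (x n : ℕ) : (rising (x + 1) n : ℝ) = (x + n)! / x ! := by
  rw [eq_div_iff (by positivity), rising, ← Nat.ascFactorial_eq_prod_range, mul_comm]
  exact_mod_cast Nat.factorial_mul_ascFactorial x n

@[fun_prop]
theorem continuous_bern (p i : ℕ) (h : ℝ) : Continuous (bern p i h) := by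
  unfold bern
  split_ifs <;> fun_prop

theorem integral_pow_mul_sub_mul_bern {p i : ℕ} (hi1 : 1 ≤ i) (hi2 : i ≤ p) (h : ℝ) (n : ℕ) :
    ∫ t in (0 : ℝ)..h, t ^ n * ((h - t) * bern p i h t) =
      h ^ 2 * ((p : ℝ) - i + 1) / ((p : ℝ) * ((p : ℝ) + 1)) *
        (rising i n * h ^ n / rising (p + 2) n) := by
  rcases eq_or_ne h 0 with rfl | hh
  · simp
  obtain ⟨a, rfl⟩ : ∃ a, i = a + 1 := ⟨i - 1, by omega⟩
  obtain ⟨b, rfl⟩ : ∃ b, p = a + 1 + b := ⟨p - (a + 1), by omega⟩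
  have hbern : ∀ t, t ^ n * ((h - t) * bern (a + 1 + b) (a + 1) h t) =
      (a + b).choose a / h ^ (a + b) * (t ^ (n + a) * (h - t) ^ (b + 1)) := fun t => by
    rw [bern, if_pos ⟨hi1, hi2⟩, show a + 1 + b - 1 = a + b by omega,
      show a + 1 + b - (a + 1) = b by omega, add_tsub_cancel_right, div_pow, div_pow]
    field_simp
    ring
  simp_rw [hbern]
  rw [integral_const_mul, integral_pow_mul_sub_pow, show a + 1 + b + 2 = (a + b + 2) + 1 by omega,
    cast_rising_succ, cast_rising_succ, Nat.cast_add_choose,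
    show n + a + (b + 1) + 1 = a + b + 2 + n by omega, show a + n = n + a by omega]
  push_cast [Nat.factorial_succ]
  field_simp
  ring

theorem bern_double_integral_exp_general (p : ℕ) (i : ℕ) (hi1 : 1 ≤ i) (hi2 : i ≤ p)
    (c : ℝ) (h : ℝ) :
    ∫ t in (0 : ℝ)..h, (∫ τ in (0 : ℝ)..t, Real.exp (c * τ) * bern p i h τ) =
      h ^ 2 * ((p : ℝ) - i + 1) / ((p : ℝ) * ((p : ℝ) + 1)) * kummer i (p + 2) (c * h) := by
  have hg : Continuous fun t => (h - t) * bern p i h t := by fun_prop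
  calc ∫ t in (0 : ℝ)..h, (∫ τ in (0 : ℝ)..t, Real.exp (c * τ) * bern p i h τ)
      = ∫ t in (0 : ℝ)..h, Real.exp (c * t) * ((h - t) * bern p i h t) := by
        rw [integral_integral_eq_integral_mul_sub (by fun_prop)]
        congr 1 with t
        ring
    _ = ∑' n : ℕ, c ^ n / n ! * ∫ t in (0 : ℝ)..h, t ^ n * ((h - t) * bern p i h t) :=
        (hasSum_integral_exp_mul c (hg.intervalIntegrable 0 h)).tsum_eq.symm
    _ = _ := by
        rw [kummer, ← tsum_mul_left]
        congr 1 with n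
        rw [integral_pow_mul_sub_mul_bern hi1 hi2]
        ring

theorem bern_double_integral_exp (p : ℕ) (hp : 1 ≤ p) (i : ℕ) (hi1 : 1 ≤ i) (hi2 : i ≤ p)
    (c : ℝ) (h : ℝ) (hh : 0 < h) :
    ∫ t in (0 : ℝ)..h, (∫ τ in (0 : ℝ)..t, Real.exp (c * τ) * bern p i h τ) =
      h ^ 2 * ((p : ℝ) - i + 1) / ((p : ℝ) * ((p : ℝ) + 1)) * kummer i (p + 2) (c * h) :=
  bern_double_integral_exp_general p i hi1 hi2 c h
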